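/- Let n be an odd positive integer. For λ, x : Fin n → ℝ, define E_λ(x) = ∑ exp(2πi ∑_i ε i · λ(σ⁻¹ i) · x i), the sum over all pairs (σ, ε) with σ a permutation of Fin n, ε : Fin n → ℝ with ε i ∈ {1, −1} for all i, and sign(σ) · ∏_i ε i = +1; and define E'_λ(x) by the same formula with the condition sign(σ) · ∏_i ε i = −1. Then for all λ and x, conj(E_λ(x)) = E'_λ(x); that is, for odd n the two E-orbit functions E_λ and E_{r_α λ} of type C_n are complex conjugates of each other. -/

import Mathlib

/-- The `E`-orbit function of type `Cₙ`: the sum of `exp(2πi ∑ᵢ ε i · λ(σ⁻¹ i) · x i)`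
over all pairs `(σ, ε)` with `σ` a permutation, `ε i ∈ {1, −1}`, and
`sign σ · ∏ᵢ ε i = 1`. -/
noncomputable def ECn (n : ℕ) (lam x : Fin n → ℝ) : ℂ :=
  ∑ σ : Equiv.Perm (Fin n),
    ∑ ε ∈ Fintype.piFinset (fun _ : Fin n => ({1, -1} : Finset ℝ)),
      if ((Equiv.Perm.sign σ : ℤ) : ℝ) * ∏ i, ε i = 1 then
        Complex.exp (2 * (Real.pi : ℂ) * Complex.I *
          ((∑ i, ε i * lam (σ⁻¹ i) * x i : ℝ) : ℂ))
      else 0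

/-- The companion `E`-orbit function of type `Cₙ` (attached to `r_α λ`): the same sum
over the pairs `(σ, ε)` with `sign σ · ∏ᵢ ε i = −1`. -/
noncomputable def ECn' (n : ℕ) (lam x : Fin n → ℝ) : ℂ :=
  ∑ σ : Equiv.Perm (Fin n),
    ∑ ε ∈ Fintype.piFinset (fun _ : Fin n => ({1, -1} : Finset ℝ)),
      if ((Equiv.Perm.sign σ : ℤ) : ℝ) * ∏ i, ε i = -1 then
        Complex.exp (2 * (Real.pi : ℂ) * Complex.I *
          ((∑ i, ε i * lam (σ⁻¹ i) * x i : ℝ) : ℂ))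
      else 0

/-!
Negating every sign, `ε ↦ -ε`, is a bijection of the sign vectors. For odd `n` it flips
`∏ᵢ ε i`, so it exchanges the two halves `sign σ · ∏ᵢ ε i = ±1` of `W(Cₙ)`, and it negates
the phase `∑ᵢ ε i · λ(σ⁻¹ i) · x i`, which conjugates `exp(2πi ·)`.
-/

theorem neg_mem_piFinset_one_neg_one_iff {ι R : Type*} [Fintype ι] [DecidableEq ι] [Ring R]
    [DecidableEq R] {ε : ι → R} :
    -ε ∈ Fintype.piFinset (fun _ : ι => ({1, -1} : Finset R)) ↔
      ε ∈ Fintype.piFinset (fun _ : ι => ({1, -1} : Finset R)) := by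
  simp only [Fintype.mem_piFinset, Finset.mem_insert, Finset.mem_singleton, Pi.neg_apply,
    neg_eq_iff_eq_neg, neg_neg]
  exact forall_congr' fun _ => or_comm

theorem prod_neg_of_odd_card {ι R : Type*} [Fintype ι] [CommRing R] (hodd : Odd (Fintype.card ι))
    (ε : ι → R) : ∏ i, (-ε) i = -∏ i, ε i := by
  rw [Pi.neg_def, Finset.prod_neg, Finset.card_univ, hodd.neg_one_pow, neg_one_mul]

theorem conj_exp_two_pi_I_mul_ofReal (t : ℝ) :
    starRingEnd ℂ (Complex.exp (2 * Real.pi * Complex.I * t)) =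
      Complex.exp (2 * Real.pi * Complex.I * ((-t : ℝ) : ℂ)) := by
  rw [← Complex.exp_conj]
  simp [Complex.conj_ofNat]

theorem ECn_conj_of_odd_general (n : ℕ) (hodd : Odd n) (lam x : Fin n → ℝ) :
    (starRingEnd ℂ) (ECn n lam x) = ECn' n lam x := by
  have hodd' : Odd (Fintype.card (Fin n)) := by rwa [Fintype.card_fin]
  unfold ECn ECn'
  simp only [map_sum]
  refine Finset.sum_congr rfl fun σ _ => ?_
  refine Finset.sum_equiv (Equiv.neg _) (fun ε => neg_mem_piFinset_one_neg_one_iff.symm)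
    fun ε _ => ?_
  have hsign : ((Equiv.Perm.sign σ : ℤ) : ℝ) * ∏ i, (-ε) i = -1 ↔
      ((Equiv.Perm.sign σ : ℤ) : ℝ) * ∏ i, ε i = 1 := by
    rw [prod_neg_of_odd_card hodd', mul_neg, neg_inj]
  have hphase : ∑ i, (-ε) i * lam (σ⁻¹ i) * x i = -∑ i, ε i * lam (σ⁻¹ i) * x i := by
    simp only [Pi.neg_apply, neg_mul, Finset.sum_neg_distrib]
  simp only [Equiv.neg_apply, hsign, hphase, apply_ite (starRingEnd ℂ),
    conj_exp_two_pi_I_mul_ofReal, map_zero]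

/-- For odd `n`, the two `E`-orbit functions `E_λ` and `E_{r_α λ}` of type `Cₙ` are
complex conjugates of each other. -/
theorem ECn_conj_of_odd (n : ℕ) (hn : 0 < n) (hodd : Odd n) (lam x : Fin n → ℝ) :
    (starRingEnd ℂ) (ECn n lam x) = ECn' n lam x :=
  ECn_conj_of_odd_general n hodd lam x
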